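/- arXiv:2206.03319 — 12 statements merged into one kernel-verified Lean document; each statement's English description precedes it below -/
import Mathlib

section
/- Let θ, θ_opt, x be points of a Euclidean space, let r_opt ≥ 0 and r ≥ r_opt be real numbers. If ‖x − θ_opt‖ ≤ r_opt (i.e. x lies in the ball B(θ_opt, r_opt)) and ‖θ − x‖ > r (i.e. x lies outside the ball B(θ, r)), then ⟨θ − θ_opt, x − θ_opt⟩ ≤ (1/2)·‖θ − θ_opt‖². -/
open scoped RealInnerProductSpace

theorem uncovered_point_projection
    {E : Type*} [NormedAddCommGroup E] [InnerProductSpace ℝ E]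
    (θ θopt x : E) (ropt r : ℝ) (hropt : 0 ≤ ropt) (hr : ropt ≤ r)
    (hx : ‖x - θopt‖ ≤ ropt) (hout : r < ‖θ - x‖) :
    ⟪θ - θopt, x - θopt⟫ ≤ (1/2) * ‖θ - θopt‖^2 := by
  have hid : ‖(θ - θopt) - (x - θopt)‖^2
      = ‖θ - θopt‖^2 - 2 * ⟪θ - θopt, x - θopt⟫ + ‖x - θopt‖^2 :=
    norm_sub_sq_real _ _
  have heq : (θ - θopt) - (x - θopt) = θ - x := by abel
  rw [heq] at hid
  nlinarith [norm_nonneg (θ - x), norm_nonneg (x - θopt)]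
end

section
/- Let θ, θ_opt be points of a Euclidean space, let r_opt ≥ 0 and r ≥ r_opt, and let S be a nonempty finite set of points such that every x ∈ S satisfies ‖x − θ_opt‖ ≤ r_opt and ‖θ − x‖ > r. Then the mean μ = (1/|S|)·Σ_{x∈S} x satisfies both ⟨θ − θ_opt, μ − θ_opt⟩ ≤ (1/2)·‖θ − θ_opt‖² and ‖μ − θ_opt‖ ≤ r_opt. -/
open scoped RealInnerProductSpace

theorem uncovered_mean_projection
    {E : Type*} [NormedAddCommGroup E] [InnerProductSpace ℝ E]
    (θ θopt : E) (ropt r : ℝ) (hropt : 0 ≤ ropt) (hr : ropt ≤ r)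
    (S : Finset E) (hS : S.Nonempty)
    (hin : ∀ x ∈ S, ‖x - θopt‖ ≤ ropt)
    (hout : ∀ x ∈ S, r < ‖θ - x‖) :
    ⟪θ - θopt, ((S.card : ℝ)⁻¹ • ∑ x ∈ S, x) - θopt⟫ ≤ (1/2) * ‖θ - θopt‖^2 ∧
      ‖((S.card : ℝ)⁻¹ • ∑ x ∈ S, x) - θopt‖ ≤ ropt := by
  have hn : 0 < (S.card : ℝ) := by exact_mod_cast Finset.card_pos.mpr hS
  have hμ : ((S.card : ℝ)⁻¹ • ∑ x ∈ S, x) - θopt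
      = (S.card : ℝ)⁻¹ • ∑ x ∈ S, (x - θopt) := by
    rw [Finset.sum_sub_distrib, smul_sub, Finset.sum_const, ← Nat.cast_smul_eq_nsmul ℝ, smul_smul,
      inv_mul_cancel₀ hn.ne', one_smul]
  constructor
  · rw [hμ, inner_smul_right, inner_sum]
    have key : ∀ x ∈ S, ⟪θ - θopt, x - θopt⟫ ≤ (1/2) * ‖θ - θopt‖^2 := by
      intro x hx
      have h1 : ‖x - θopt‖ ≤ r := le_trans (hin x hx) hr
      have h2 := hout x hx
      have e : θ - x = (θ - θopt) - (x - θopt) := by abel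
      have hsq : ‖θ - x‖^2 = ‖θ - θopt‖^2 - 2 * ⟪θ - θopt, x - θopt⟫ + ‖x - θopt‖^2 := by
        rw [e, norm_sub_sq_real]
      nlinarith [norm_nonneg (x - θopt), norm_nonneg (θ - x), hropt.trans hr]
    have hsum : ∑ x ∈ S, ⟪θ - θopt, x - θopt⟫ ≤ (S.card : ℝ) * ((1/2) * ‖θ - θopt‖^2) := by
      calc ∑ x ∈ S, ⟪θ - θopt, x - θopt⟫ ≤ ∑ _x ∈ S, (1/2) * ‖θ - θopt‖^2 :=
            Finset.sum_le_sum key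
        _ = (S.card : ℝ) * ((1/2) * ‖θ - θopt‖^2) := by
            rw [Finset.sum_const, nsmul_eq_mul]
    have := mul_le_mul_of_nonneg_left hsum (inv_nonneg.mpr hn.le)
    rwa [← mul_assoc, inv_mul_cancel₀ hn.ne', one_mul] at this
  · rw [hμ, norm_smul, norm_inv, Real.norm_natCast]
    have hsum : ‖∑ x ∈ S, (x - θopt)‖ ≤ (S.card : ℝ) * ropt := by
      calc ‖∑ x ∈ S, (x - θopt)‖ ≤ ∑ x ∈ S, ‖x - θopt‖ := norm_sum_le _ _
        _ ≤ ∑ _x ∈ S, ropt := Finset.sum_le_sum hin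
        _ = (S.card : ℝ) * ropt := by rw [Finset.sum_const, nsmul_eq_mul]
    have := mul_le_mul_of_nonneg_left hsum (inv_nonneg.mpr hn.le)
    rwa [← mul_assoc, inv_mul_cancel₀ hn.ne', one_mul] at this
end

section
/- Let θ, θ_opt, μ be points of a Euclidean space, let r_opt ≥ 0 and γ ∈ (0,1). Assume ⟨θ − θ_opt, μ − θ_opt⟩ ≤ (1/2)·‖θ − θ_opt‖² and ‖μ − θ_opt‖ ≤ r_opt. Then the point θ' := θ − (γ²/2)·(θ − μ) satisfies ‖θ' − θ_opt‖² ≤ (1 − γ²/2)·‖θ − θ_opt‖² + (γ⁴/4)·r_opt². -/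
open scoped RealInnerProductSpace

theorem one_step_progress
    {E : Type*} [NormedAddCommGroup E] [InnerProductSpace ℝ E]
    (θ θopt μ : E) (ropt γ : ℝ) (hropt : 0 ≤ ropt) (hγ0 : 0 < γ) (hγ1 : γ < 1)
    (hproj : ⟪θ - θopt, μ - θopt⟫ ≤ (1/2) * ‖θ - θopt‖^2)
    (hμ : ‖μ - θopt‖ ≤ ropt) :
    ‖(θ - (γ^2/2) • (θ - μ)) - θopt‖^2 ≤
      (1 - γ^2/2) * ‖θ - θopt‖^2 + (γ^4/4) * ropt^2 := by
  set c : ℝ := γ^2/2 with hc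
  have hc0 : 0 < c := by positivity
  have hc1 : c < 1 := by nlinarith
  have hid : (θ - c • (θ - μ)) - θopt = (1 - c) • (θ - θopt) + c • (μ - θopt) := by
    simp [smul_sub, sub_smul]; abel
  rw [hid, norm_add_sq_real, norm_smul, norm_smul, real_inner_smul_left,
    real_inner_smul_right]
  have hb2 : ‖μ - θopt‖^2 ≤ ropt^2 := by
    have := norm_nonneg (μ - θopt); nlinarith
  simp only [Real.norm_eq_abs, mul_pow]
  rw [abs_of_nonneg (by linarith : (0:ℝ) ≤ 1 - c), abs_of_nonneg hc0.le]
  have h4 : γ^4/4 = c^2 := by rw [hc]; ring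
  rw [h4]
  nlinarith [mul_nonneg (mul_nonneg (by linarith : (0:ℝ) ≤ 1 - c) hc0.le) (by linarith : 0 ≤ 1/2 * ‖θ - θopt‖^2 - ⟪θ - θopt, μ - θopt⟫), mul_nonneg (mul_nonneg hc0.le hc0.le) (by linarith : 0 ≤ ropt^2 - ‖μ - θopt‖^2)]
end

section
/- Let θ, θ_opt, μ be points of a Euclidean space, let r_opt ≥ 0 and γ ∈ (0,1). Assume ⟨θ − θ_opt, μ − θ_opt⟩ ≤ (1/2)·‖θ − θ_opt‖², ‖μ − θ_opt‖ ≤ r_opt, and ‖θ − θ_opt‖ ≥ γ·r_opt. Then the point θ' := θ − (γ²/2)·(θ − μ) satisfies ‖θ' − θ_opt‖² ≤ (1 − γ²/4)·‖θ − θ_opt‖². -/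
open scoped RealInnerProductSpace

theorem one_step_geometric_decrease
    {E : Type*} [NormedAddCommGroup E] [InnerProductSpace ℝ E]
    (θ θopt μ : E) (ropt γ : ℝ) (hropt : 0 ≤ ropt) (hγ0 : 0 < γ) (hγ1 : γ < 1)
    (hproj : ⟪θ - θopt, μ - θopt⟫ ≤ (1/2) * ‖θ - θopt‖^2)
    (hμ : ‖μ - θopt‖ ≤ ropt)
    (hfar : γ * ropt ≤ ‖θ - θopt‖) :
    ‖(θ - (γ^2/2) • (θ - μ)) - θopt‖^2 ≤ (1 - γ^2/4) * ‖θ - θopt‖^2 := by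
  set c : ℝ := γ^2/2 with hc
  have hrw : (θ - c • (θ - μ)) - θopt = (1 - c) • (θ - θopt) + c • (μ - θopt) := by
    module
  rw [hrw, norm_add_sq_real, norm_smul, norm_smul, real_inner_smul_left,
    real_inner_smul_right]
  have hc0 : 0 ≤ c := by positivity
  have hc1 : c ≤ 1/2 := by nlinarith
  have h1 : ‖(1 - c : ℝ)‖ = 1 - c := by
    rw [Real.norm_eq_abs, abs_of_nonneg]; linarith
  have h2 : ‖(c : ℝ)‖ = c := by rw [Real.norm_eq_abs, abs_of_nonneg hc0]
  rw [h1, h2]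
  have hb0 : (0:ℝ) ≤ ‖μ - θopt‖ := norm_nonneg _
  have ha0 : (0:ℝ) ≤ ‖θ - θopt‖ := norm_nonneg _
  have hfar2 : γ^2 * ropt^2 ≤ ‖θ - θopt‖^2 := by
    nlinarith [mul_nonneg hγ0.le hropt]
  have hμ2 : ‖μ - θopt‖^2 ≤ ropt^2 := by nlinarith
  have hcc : (0:ℝ) ≤ c * (1 - c) := by nlinarith
  have h3 : 2 * ((1 - c) * (c * ⟪θ - θopt, μ - θopt⟫)) ≤
      (1 - c) * c * ‖θ - θopt‖^2 := by nlinarith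
  have h4 : c^2 * ‖μ - θopt‖^2 ≤ (γ^2/4) * ‖θ - θopt‖^2 := by
    have h5 : c^2 * ‖μ - θopt‖^2 ≤ c^2 * ropt^2 := by nlinarith
    have h6 : c^2 * ropt^2 = (γ^2/4) * (γ^2 * ropt^2) := by rw [hc]; ring
    nlinarith [mul_le_mul_of_nonneg_left hfar2 (show (0:ℝ) ≤ γ^2/4 by positivity)]
  have e1 : (c * ‖μ - θopt‖)^2 = c^2 * ‖μ - θopt‖^2 := by ring
  have e2 : ((1-c) * ‖θ - θopt‖)^2 + (1-c)*c*‖θ - θopt‖^2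
      = (1 - γ^2/4 - γ^2/4) * ‖θ - θopt‖^2 := by rw [hc]; ring
  linarith
end

section
/- Let θ, θ_opt, μ be points of a Euclidean space, let r_opt ≥ 0 and γ ∈ (0,1). Assume ⟨θ − θ_opt, μ − θ_opt⟩ ≤ (1/2)·‖θ − θ_opt‖², ‖μ − θ_opt‖ ≤ r_opt, and ‖θ − θ_opt‖ < γ·r_opt. Then the point θ' := θ − (γ²/2)·(θ − μ) also satisfies ‖θ' − θ_opt‖ < γ·r_opt. -/
open scoped RealInnerProductSpace

theorem one_step_stability
    {E : Type*} [NormedAddCommGroup E] [InnerProductSpace ℝ E]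
    (θ θopt μ : E) (ropt γ : ℝ) (hropt : 0 ≤ ropt) (hγ0 : 0 < γ) (hγ1 : γ < 1)
    (hproj : ⟪θ - θopt, μ - θopt⟫ ≤ (1/2) * ‖θ - θopt‖^2)
    (hμ : ‖μ - θopt‖ ≤ ropt)
    (hclose : ‖θ - θopt‖ < γ * ropt) :
    ‖(θ - (γ^2/2) • (θ - μ)) - θopt‖ < γ * ropt := by
  set a := θ - θopt with ha
  set b := μ - θopt with hb
  obtain ⟨c, hc⟩ : ∃ c : ℝ, c = γ^2/2 := ⟨_, rfl⟩
  have hv : (θ - (γ^2/2) • (θ - μ)) - θopt = (1 - c) • a + c • b := by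
    rw [ha, hb, hc]
    module
  rw [hv]
  have hc0 : 0 < c := by rw [hc]; positivity
  have hc1 : c < 1/2 := by rw [hc]; nlinarith
  have hexp : ‖(1 - c) • a + c • b‖^2
      = (1 - c)^2 * ‖a‖^2 + 2 * ((1 - c) * c * ⟪a, b⟫) + c^2 * ‖b‖^2 := by
    rw [@norm_add_sq_real, real_inner_smul_left, real_inner_smul_right,
      norm_smul, norm_smul, mul_pow, mul_pow]
    simp [Real.norm_eq_abs, sq_abs]
    ring
  have hb0 : 0 ≤ ‖b‖ := norm_nonneg b
  have ha0 : 0 ≤ ‖a‖ := norm_nonneg a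
  have hgr : 0 < γ * ropt := lt_of_le_of_lt ha0 hclose
  have ha2 : ‖a‖^2 < (γ * ropt)^2 := by nlinarith
  have hb2 : ‖b‖^2 ≤ ropt^2 := by nlinarith
  have key : ‖(1 - c) • a + c • b‖^2 < (γ * ropt)^2 := by
    rw [hexp]
    have h1c : (0:ℝ) < 1 - c := by nlinarith
    have e1 : (1-c)^2 * ‖a‖^2 + 2 * ((1-c) * c * ⟪a, b⟫) + c^2 * ‖b‖^2
        ≤ (1-c) * ‖a‖^2 + c^2 * ropt^2 := by
      nlinarith [mul_le_mul_of_nonneg_left hproj (by positivity : (0:ℝ) ≤ 2 * ((1-c)*c)),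
        mul_le_mul_of_nonneg_left hb2 (sq_nonneg c)]
    have e2 : (1-c) * ‖a‖^2 < (1-c) * (γ*ropt)^2 := mul_lt_mul_of_pos_left ha2 h1c
    have e3 : c^2 * ropt^2 ≤ c * (γ*ropt)^2 := by
      have h2 : c * (γ*ropt)^2 = 2 * (c^2 * ropt^2) := by rw [hc]; ring
      have h0 : (0:ℝ) ≤ c^2 * ropt^2 := by positivity
      linarith
    have e4 : (1-c) * (γ*ropt)^2 + c * (γ*ropt)^2 = (γ*ropt)^2 := by ring
    linarith
  have := lt_of_pow_lt_pow_left₀ 2 (le_of_lt hgr) key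
  exact this
end

section
/- Let P be a nonempty finite set of points in a Euclidean space contained in the ball B(θ_opt, r_opt) with r_opt > 0, let γ ∈ (0,1), let r ≥ r_opt, and let θ : ℕ → the space be a sequence with ‖θ⁰ − θ_opt‖ ≤ 10·r_opt such that for every t: if P ⊆ B(θᵗ, r) then θ^{t+1} = θᵗ, and otherwise θ^{t+1} = θᵗ − (γ²/2)·(θᵗ − μᵗ) where μᵗ is the mean of the set {x ∈ P : ‖x − θᵗ‖ > r}. Then for every integer T ≥ (4/γ²)·ln(100/γ²) it holds that P ⊆ B(θᵀ, (1+γ)·r). -/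
open scoped RealInnerProductSpace

lemma MMEB_step_bound
    {E : Type*} [NormedAddCommGroup E] [InnerProductSpace ℝ E]
    (Q : Finset E) (hQ : Q.Nonempty)
    (θopt θ : E) (ropt r : ℝ) (hropt : 0 < ropt) (hr : ropt ≤ r)
    (hcov : ∀ x ∈ Q, ‖x - θopt‖ ≤ ropt)
    (hfar : ∀ x ∈ Q, r < ‖x - θ‖)
    (η : ℝ) (hη0 : 0 < η) (hη1 : η < 1) :
    ‖θ - η • (θ - ((Q.card : ℝ)⁻¹ • ∑ x ∈ Q, x)) - θopt‖^2
      ≤ (1-η) * ‖θ - θopt‖^2 - η*(1-η)*r^2 + η*ropt^2 := by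
  have hn0 : (0:ℝ) < (Q.card : ℝ) := by
    exact_mod_cast Finset.card_pos.mpr hQ
  set μ : E := (Q.card : ℝ)⁻¹ • ∑ x ∈ Q, x with hμ
  set d : E := θ - θopt with hd
  set m : E := μ - θopt with hm
  have hmrepr : m = (Q.card : ℝ)⁻¹ • ∑ x ∈ Q, (x - θopt) := by
    rw [hm, hμ, Finset.sum_sub_distrib, smul_sub, Finset.sum_const]
    congr 1
    rw [← Nat.cast_smul_eq_nsmul ℝ, smul_smul, inv_mul_cancel₀ hn0.ne', one_smul]
  have hmnorm : ‖m‖ ≤ ropt := by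
    rw [hmrepr, norm_smul, Real.norm_eq_abs, abs_of_pos (by positivity)]
    have h1 : ‖∑ x ∈ Q, (x - θopt)‖ ≤ ∑ x ∈ Q, ‖x - θopt‖ := norm_sum_le _ _
    have h2 : ∑ x ∈ Q, ‖x - θopt‖ ≤ Q.card • ropt :=
      Finset.sum_le_card_nsmul Q _ ropt (fun x hx => hcov x hx)
    rw [nsmul_eq_mul] at h2
    calc ((Q.card:ℝ))⁻¹ * ‖∑ x ∈ Q, (x - θopt)‖
        ≤ ((Q.card:ℝ))⁻¹ * ((Q.card:ℝ) * ropt) := by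
          apply mul_le_mul_of_nonneg_left (le_trans h1 h2) (by positivity)
      _ = ropt := by field_simp
  have hterm : ∀ x ∈ Q, ⟪d, x - θopt⟫ ≤ (‖d‖^2 + ropt^2 - r^2)/2 := by
    intro x hx
    have key : ‖d - (x - θopt)‖^2 = ‖d‖^2 - 2*⟪d, x - θopt⟫ + ‖x - θopt‖^2 := by
      rw [norm_sub_sq_real]
    have hde : d - (x - θopt) = θ - x := by rw [hd]; abel
    rw [hde] at key
    have h1 : r^2 < ‖θ - x‖^2 := by
      have h := hfar x hx
      rw [norm_sub_rev] at h
      nlinarith [norm_nonneg (θ - x), hropt, hr]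
    have h2 : ‖x - θopt‖^2 ≤ ropt^2 :=
      pow_le_pow_left₀ (norm_nonneg _) (hcov x hx) 2
    nlinarith
  have hip : ⟪d, m⟫ ≤ (‖d‖^2 + ropt^2 - r^2)/2 := by
    rw [hmrepr, real_inner_smul_right, inner_sum]
    have hsum : ∑ x ∈ Q, ⟪d, x - θopt⟫ ≤ Q.card • ((‖d‖^2 + ropt^2 - r^2)/2) :=
      Finset.sum_le_card_nsmul Q _ _ hterm
    rw [nsmul_eq_mul] at hsum
    calc ((Q.card:ℝ))⁻¹ * ∑ x ∈ Q, ⟪d, x - θopt⟫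
        ≤ ((Q.card:ℝ))⁻¹ * ((Q.card:ℝ) * ((‖d‖^2 + ropt^2 - r^2)/2)) := by
          apply mul_le_mul_of_nonneg_left hsum (by positivity)
      _ = (‖d‖^2 + ropt^2 - r^2)/2 := by field_simp
  have hE : θ - η • (θ - μ) - θopt = (1-η) • d + η • m := by
    rw [hd, hm]
    module
  have h1η : (0:ℝ) < 1 - η := by linarith
  rw [hE, norm_add_sq_real, norm_smul, norm_smul, real_inner_smul_left,
      real_inner_smul_right, Real.norm_eq_abs, Real.norm_eq_abs,
      abs_of_pos h1η, abs_of_pos hη0]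
  have hm2 : ‖m‖^2 ≤ ropt^2 := pow_le_pow_left₀ (norm_nonneg _) hmnorm 2
  have k1 : 2*η*(1-η)*⟪d, m⟫ ≤ 2*η*(1-η)*((‖d‖^2 + ropt^2 - r^2)/2) := by
    apply mul_le_mul_of_nonneg_left hip
    nlinarith
  have k2 : η^2*‖m‖^2 ≤ η^2*ropt^2 := mul_le_mul_of_nonneg_left hm2 (sq_nonneg η)
  nlinarith [k1, k2]

theorem MMEB_convergence
    {E : Type*} [NormedAddCommGroup E] [InnerProductSpace ℝ E]
    (P : Finset E) (hP : P.Nonempty)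
    (θopt : E) (ropt : ℝ) (hropt : 0 < ropt)
    (hcov : ∀ x ∈ P, ‖x - θopt‖ ≤ ropt)
    (γ : ℝ) (hγ0 : 0 < γ) (hγ1 : γ < 1)
    (r : ℝ) (hr : ropt ≤ r)
    (θ : ℕ → E) (hθ0 : ‖θ 0 - θopt‖ ≤ 10 * ropt)
    (hstop : ∀ t, (∀ x ∈ P, ‖x - θ t‖ ≤ r) → θ (t+1) = θ t)
    (hstep : ∀ t, ¬ (∀ x ∈ P, ‖x - θ t‖ ≤ r) →
      θ (t+1) = θ t - (γ^2/2) • (θ t -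
        ((((P.filter (fun x => r < ‖x - θ t‖)).card : ℝ))⁻¹ •
          ∑ x ∈ P.filter (fun x => r < ‖x - θ t‖), x)))
    (T : ℕ) (hT : (4/γ^2) * Real.log (100/γ^2) ≤ T) :
    ∀ x ∈ P, ‖x - θ T‖ ≤ (1+γ) * r := by
  have hrpos : 0 < r := lt_of_lt_of_le hropt hr
  have hγ2 : γ^2 < 1 := by nlinarith
  have hropt2 : ropt^2 ≤ r^2 := by nlinarith
  by_cases hhalt : ∃ t ≤ T, ∀ x ∈ P, ‖x - θ t‖ ≤ r
  · obtain ⟨t, htT, hct⟩ := hhalt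
    have hconst : ∀ s, θ (t + s) = θ t := by
      intro s
      induction s with
      | zero => rfl
      | succ s ih =>
        have hc2 : ∀ x ∈ P, ‖x - θ (t + s)‖ ≤ r := by
          intro x hx; rw [ih]; exact hct x hx
        have : θ (t + s + 1) = θ (t + s) := hstop (t + s) hc2
        rw [show t + (s + 1) = t + s + 1 from rfl, this, ih]
    have hθT : θ T = θ t := by
      have := hconst (T - t)
      rwa [Nat.add_sub_cancel' htT] at this
    intro x hx
    rw [hθT]
    have := hct x hx
    nlinarith [mul_pos hγ0 hrpos]
  · push_neg at hhalt
    have key : ∀ t, t ≤ T →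
        ‖θ t - θopt‖^2 ≤ max ((1 - γ^2/4)^t * (100*ropt^2)) (γ^2*r^2) := by
      intro t
      induction t with
      | zero =>
        intro _
        have h0 : ‖θ 0 - θopt‖^2 ≤ 100*ropt^2 := by
          nlinarith [norm_nonneg (θ 0 - θopt)]
        apply le_max_of_le_left
        rw [pow_zero, one_mul]
        exact h0
      | succ t ih =>
        intro ht1
        have htT : t ≤ T := le_trans (Nat.le_succ t) ht1
        have ihb := ih htT
        obtain ⟨x0, hx0P, hx0⟩ := hhalt t htT
        have hnc : ¬ (∀ x ∈ P, ‖x - θ t‖ ≤ r) := by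
          intro h; exact absurd (h x0 hx0P) (not_le.mpr hx0)
        have hstepf := hstep t hnc
        set Q := P.filter (fun x => r < ‖x - θ t‖) with hQdef
        have hQne : Q.Nonempty := ⟨x0, Finset.mem_filter.mpr ⟨hx0P, hx0⟩⟩
        have hQcov : ∀ x ∈ Q, ‖x - θopt‖ ≤ ropt :=
          fun x hx => hcov x (Finset.mem_filter.mp hx).1
        have hQfar : ∀ x ∈ Q, r < ‖x - θ t‖ :=
          fun x hx => (Finset.mem_filter.mp hx).2
        have hsb := MMEB_step_bound Q hQne θopt (θ t) ropt r hropt hr hQcov hQfar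
          (γ^2/2) (by positivity) (by linarith)
        rw [← hstepf] at hsb
        rcases le_or_gt (γ^2*ropt^2) (‖θ t - θopt‖^2) with h1 | h1
        · -- contraction case
          have hc : ‖θ (t+1) - θopt‖^2 ≤ (1 - γ^2/4) * ‖θ t - θopt‖^2 := by
            have q1 : (γ^2/2)*(1-γ^2/2)*ropt^2 ≤ (γ^2/2)*(1-γ^2/2)*r^2 :=
              mul_le_mul_of_nonneg_left hropt2
                (mul_nonneg (by positivity) (by linarith))
            have q2 : (γ^2/4)*(γ^2*ropt^2) ≤ (γ^2/4)*‖θ t - θopt‖^2 :=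
              mul_le_mul_of_nonneg_left h1 (by positivity)
            linarith [hsb, q1, q2]
          rcases le_total ((1 - γ^2/4)^t * (100*ropt^2)) (γ^2*r^2) with hm | hm
          · have hDt : ‖θ t - θopt‖^2 ≤ γ^2*r^2 := by
              rw [max_eq_right hm] at ihb; exact ihb
            apply le_max_of_le_right
            have p : (1-γ^2/4)*‖θ t - θopt‖^2 ≤ (1-γ^2/4)*(γ^2*r^2) :=
              mul_le_mul_of_nonneg_left hDt (by linarith)
            have hq : (0:ℝ) ≤ γ^2*(γ^2*r^2) := by positivity
            linarith [hc, p, hq]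
          · have hDt : ‖θ t - θopt‖^2 ≤ (1 - γ^2/4)^t * (100*ropt^2) := by
              rw [max_eq_left hm] at ihb; exact ihb
            apply le_max_of_le_left
            calc ‖θ (t+1) - θopt‖^2 ≤ (1 - γ^2/4) * ‖θ t - θopt‖^2 := hc
              _ ≤ (1 - γ^2/4) * ((1 - γ^2/4)^t * (100*ropt^2)) := by
                  apply mul_le_mul_of_nonneg_left hDt (by linarith)
              _ = (1 - γ^2/4)^(t+1) * (100*ropt^2) := by ring
        · -- small case
          apply le_max_of_le_right
          have hD : ‖θ t - θopt‖^2 ≤ γ^2 * r^2 := by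
            have := mul_le_mul_of_nonneg_left hropt2 (sq_nonneg γ)
            linarith
          have p1 : (1-γ^2/2)*‖θ t - θopt‖^2 ≤ (1-γ^2/2)*(γ^2*r^2) :=
            mul_le_mul_of_nonneg_left hD (by linarith)
          have p2 : (γ^2/2)*ropt^2 ≤ (γ^2/2)*r^2 :=
            mul_le_mul_of_nonneg_left hropt2 (by positivity)
          have hq : (0:ℝ) ≤ γ^2*(γ^2*r^2) := by positivity
          linarith [hsb, p1, p2, hq]
    have hfinal := key T le_rfl
    have hexp : (1 - γ^2/4:ℝ)^T ≤ γ^2/100 := by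
      have e1 : (1 - γ^2/4:ℝ) ≤ Real.exp (-(γ^2/4)) := by
        linarith [Real.add_one_le_exp (-(γ^2/4))]
      have e2 : (1 - γ^2/4:ℝ)^T ≤ (Real.exp (-(γ^2/4)))^T :=
        pow_le_pow_left₀ (by linarith) e1 T
      have e3 : (Real.exp (-(γ^2/4)))^T = Real.exp ((T:ℝ) * (-(γ^2/4))) := by
        rw [← Real.exp_nat_mul]
      have e4 : (T:ℝ) * (-(γ^2/4)) ≤ - Real.log (100/γ^2) := by
        have hL : Real.log (100/γ^2) ≤ γ^2/4 * T := by
          have h := mul_le_mul_of_nonneg_left hT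
            (le_of_lt (show (0:ℝ) < γ^2/4 by positivity))
          calc Real.log (100/γ^2)
              = γ^2/4 * ((4/γ^2) * Real.log (100/γ^2)) := by
                field_simp
            _ ≤ γ^2/4 * T := h
        linarith
      have e5 : Real.exp (-Real.log (100/γ^2)) = γ^2/100 := by
        rw [Real.exp_neg, Real.exp_log (by positivity)]
        field_simp
      calc (1 - γ^2/4:ℝ)^T ≤ Real.exp ((T:ℝ)*(-(γ^2/4))) := by rw [← e3]; exact e2
        _ ≤ Real.exp (-Real.log (100/γ^2)) := Real.exp_le_exp.mpr e4
        _ = γ^2/100 := e5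
    have hDT : ‖θ T - θopt‖^2 ≤ γ^2 * r^2 := by
      apply le_trans hfinal
      apply max_le _ le_rfl
      calc (1 - γ^2/4)^T * (100*ropt^2) ≤ (γ^2/100) * (100*ropt^2) := by
            apply mul_le_mul_of_nonneg_right hexp (by positivity)
        _ = γ^2 * ropt^2 := by ring
        _ ≤ γ^2 * r^2 := mul_le_mul_of_nonneg_left hropt2 (sq_nonneg γ)
    have hDT' : ‖θ T - θopt‖ ≤ γ * r := by
      nlinarith [norm_nonneg (θ T - θopt), mul_pos hγ0 hrpos,
        sq_nonneg (‖θ T - θopt‖ - γ*r)]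
    intro x hx
    calc ‖x - θ T‖ = ‖(x - θopt) + (θopt - θ T)‖ := by rw [sub_add_sub_cancel]
      _ ≤ ‖x - θopt‖ + ‖θopt - θ T‖ := norm_add_le _ _
      _ = ‖x - θopt‖ + ‖θ T - θopt‖ := by rw [norm_sub_rev θopt]
      _ ≤ ropt + γ * r := add_le_add (hcov x hx) hDT'
      _ ≤ (1+γ)*r := by nlinarith
end

section
/- Let P be a nonempty finite set of points in a Euclidean space contained in the ball B(θ_opt, r_opt) with r_opt > 0, let γ ∈ (0,1), let r ≥ r_opt, and let θ : ℕ → the space be a sequence with ‖θ⁰ − θ_opt‖ ≤ 10·r_opt such that for every t: if P ⊆ B(θᵗ, r) then θ^{t+1} = θᵗ, and otherwise θ^{t+1} = θᵗ − (γ²/2)·(θᵗ − zᵗ) for some point zᵗ in the convex hull of the set {x ∈ P : ‖x − θᵗ‖ > r}. Then for every integer T ≥ (4/γ²)·ln(100/γ²) it holds that P ⊆ B(θᵀ, (1+γ)·r). -/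
open scoped RealInnerProductSpace

set_option maxHeartbeats 1600000 in
theorem MMEB_convergence_convex_combination
    {E : Type*} [NormedAddCommGroup E] [InnerProductSpace ℝ E]
    (P : Finset E) (hP : P.Nonempty)
    (θopt : E) (ropt : ℝ) (hropt : 0 < ropt)
    (hcov : ∀ x ∈ P, ‖x - θopt‖ ≤ ropt)
    (γ : ℝ) (hγ0 : 0 < γ) (hγ1 : γ < 1)
    (r : ℝ) (hr : ropt ≤ r)
    (θ : ℕ → E) (hθ0 : ‖θ 0 - θopt‖ ≤ 10 * ropt)
    (z : ℕ → E)
    (hstop : ∀ t, (∀ x ∈ P, ‖x - θ t‖ ≤ r) → θ (t+1) = θ t)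
    (hstep : ∀ t, ¬ (∀ x ∈ P, ‖x - θ t‖ ≤ r) →
      z t ∈ convexHull ℝ {x : E | x ∈ P ∧ r < ‖x - θ t‖} ∧
      θ (t+1) = θ t - (γ^2/2) • (θ t - z t))
    (T : ℕ) (hT : (4/γ^2) * Real.log (100/γ^2) ≤ T) :
    ∀ x ∈ P, ‖x - θ T‖ ≤ (1+γ) * r := by
  set η : ℝ := γ^2/2 with hηdef
  have hη0 : 0 < η := by positivity
  have hη1 : η < 1 := by nlinarith
  have hr0 : 0 < r := lt_of_lt_of_le hropt hr
  -- per-step estimate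
  have step : ∀ t, ¬ (∀ y ∈ P, ‖y - θ t‖ ≤ r) →
      ‖θ (t+1) - θopt‖^2 ≤ (1-η) * ‖θ t - θopt‖^2 + η * (η * r^2) := by
    intro t hn
    obtain ⟨hz, hupd⟩ := hstep t hn
    set u := θ t - θopt with hu
    set v := θ t - z t with hv
    have hw : ‖z t - θopt‖ ≤ ropt := by
      have hsub : convexHull ℝ {x : E | x ∈ P ∧ r < ‖x - θ t‖} ⊆
          Metric.closedBall θopt ropt := by
        apply convexHull_min
        · intro y hy
          simpa [Metric.mem_closedBall, dist_eq_norm] using hcov y hy.1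
        · exact convex_closedBall θopt ropt
      have := hsub hz
      simpa [Metric.mem_closedBall, dist_eq_norm] using this
    have hB : (‖u‖^2 + r^2 - ropt^2)/2 ≤ ⟪u, v⟫ := by
      set C : ℝ := ⟪u, θ t⟫ - (‖u‖^2 + r^2 - ropt^2)/2 with hC
      have hsub : convexHull ℝ {x : E | x ∈ P ∧ r < ‖x - θ t‖} ⊆
          {x : E | ⟪u, x⟫ ≤ C} := by
        apply convexHull_min
        · intro y hy
          have h1 : r < ‖θ t - y‖ := by rw [norm_sub_rev]; exact hy.2
          have h2 : ‖y - θopt‖ ≤ ropt := hcov y hy.1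
          have key : ‖y - θopt‖^2 = ‖u‖^2 - 2*⟪u, θ t - y⟫ + ‖θ t - y‖^2 := by
            have h3 : y - θopt = u - (θ t - y) := by rw [hu]; abel
            rw [h3, @norm_sub_sq_real]
          have h4 : r^2 < ‖θ t - y‖^2 := by
            have := norm_nonneg (θ t - y)
            nlinarith
          have h5 : ‖y - θopt‖^2 ≤ ropt^2 := by
            nlinarith [norm_nonneg (y - θopt)]
          have h6 : ⟪u, θ t - y⟫ = ⟪u, θ t⟫ - ⟪u, y⟫ := inner_sub_right u (θ t) y
          simp only [Set.mem_setOf_eq, hC]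
          nlinarith
        · exact convex_halfSpace_le
            ⟨fun a b => inner_add_right u a b, fun c a => real_inner_smul_right u a c⟩ C
      have h7 : ⟪u, z t⟫ ≤ C := hsub hz
      have h8 : ⟪u, v⟫ = ⟪u, θ t⟫ - ⟪u, z t⟫ := inner_sub_right u (θ t) (z t)
      rw [hC] at h7
      linarith
    -- now compute
    have e1 : ‖θ (t+1) - θopt‖^2 = ‖u‖^2 - 2*η*⟪u, v⟫ + η^2 * ‖v‖^2 := by
      have h3 : θ (t+1) - θopt = u - η • v := by
        rw [hupd, hu, hv]; abel
      rw [h3, @norm_sub_sq_real, real_inner_smul_right, norm_smul]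
      simp [abs_of_pos hη0]
      ring
    have e2 : ‖z t - θopt‖^2 = ‖u‖^2 - 2*⟪u, v⟫ + ‖v‖^2 := by
      have h3 : z t - θopt = u - v := by rw [hu, hv]; abel
      rw [h3, @norm_sub_sq_real]
    have e4 : ‖z t - θopt‖^2 ≤ ropt^2 := by
      nlinarith [norm_nonneg (z t - θopt)]
    have e5 : (0:ℝ) ≤ ‖z t - θopt‖^2 := sq_nonneg _
    -- m - w ≥ r² - ropt², where m = ‖v‖², w = ‖z t - θopt‖²
    have e6 : r^2 - ropt^2 ≤ ‖v‖^2 - ‖z t - θopt‖^2 := by linarith [hB, e2]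
    have hropt2 : ropt^2 ≤ r^2 := by nlinarith [hropt.le, hr]
    have e7 : ‖θ (t+1) - θopt‖^2 = (1-η) * ‖u‖^2
        - η*(1-η)*(‖v‖^2 - ‖z t - θopt‖^2) + η^2 * ‖z t - θopt‖^2 := by
      linear_combination e1 - η * e2
    have k : (0:ℝ) ≤ η*(1-η) := mul_nonneg hη0.le (by linarith)
    have p1 : η*(1-η)*(r^2-ropt^2) ≤ η*(1-η)*(‖v‖^2 - ‖z t - θopt‖^2) :=
      mul_le_mul_of_nonneg_left e6 k
    have p2 : η^2 * ‖z t - θopt‖^2 ≤ η^2 * ropt^2 :=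
      mul_le_mul_of_nonneg_left e4 (sq_nonneg η)
    have p3 : (0:ℝ) ≤ η*(1-η)*(r^2-ropt^2) := mul_nonneg k (by linarith)
    have p4 : η^2*ropt^2 ≤ η^2*r^2 := mul_le_mul_of_nonneg_left hropt2 (sq_nonneg η)
    have p5 : η*(η*r^2) = η^2*r^2 := by ring
    linarith
  -- once covered, stays covered
  have main : ∀ t, (∀ y ∈ P, ‖y - θ t‖ ≤ r) ∨
      ‖θ t - θopt‖^2 ≤ (1-η)^t * (100*ropt^2) + η*r^2 := by
    intro t
    induction t with
    | zero =>
      right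
      have h0 : ‖θ 0 - θopt‖^2 ≤ (10*ropt)^2 :=
        pow_le_pow_left₀ (norm_nonneg _) hθ0 2
      simp only [pow_zero, one_mul]
      nlinarith
    | succ t ih =>
      by_cases hc : ∀ y ∈ P, ‖y - θ t‖ ≤ r
      · left; rw [hstop t hc]; exact hc
      · rcases ih with h | h
        · exact absurd h hc
        · right
          have hs := step t hc
          have hpow : (0:ℝ) ≤ (1-η)^t := pow_nonneg (by linarith) t
          have h9 : (1-η) * ‖θ t - θopt‖^2 ≤ (1-η) * ((1-η)^t * (100*ropt^2) + η*r^2) :=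
            mul_le_mul_of_nonneg_left h (by linarith)
          have : (1-η) * ((1-η)^t * (100*ropt^2) + η*r^2) + η*(η*r^2)
              = (1-η)^(t+1) * (100*ropt^2) + η*r^2 := by ring
          linarith
  intro x hx
  rcases main T with h | h
  · have := h x hx
    nlinarith
  · -- bound (1-η)^T
    have hL0 : (0:ℝ) < 100/γ^2 := by positivity
    have hexp : Real.exp (Real.log (100/γ^2)) = 100/γ^2 := Real.exp_log hL0
    set L := Real.log (100/γ^2) with hLdef
    have hηT : 2*L ≤ η * T := by
      have h1 : η * ((4/γ^2) * L) ≤ η * T := mul_le_mul_of_nonneg_left hT hη0.le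
      have h2 : η * ((4/γ^2) * L) = 2*L := by
        rw [hηdef]; field_simp; ring
      linarith
    have h1 : (1-η)^T ≤ Real.exp (-η) ^ T := by
      apply pow_le_pow_left₀ (by linarith)
      have := Real.add_one_le_exp (-η)
      linarith
    have h2 : Real.exp (-η) ^ T = Real.exp (-(η*T)) := by
      rw [← Real.exp_nat_mul]; ring_nf
    have h3 : Real.exp (-(η*T)) ≤ Real.exp (-(2*L)) := by
      apply Real.exp_le_exp.mpr; linarith
    have h4 : Real.exp (-(2*L)) = (γ^2/100)^2 := by
      have : Real.exp (-(2*L)) * Real.exp (2*L) = 1 := by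
        rw [← Real.exp_add]; simp
      have h5 : Real.exp (2*L) = (100/γ^2)^2 := by
        have : (2:ℝ)*L = L + L := by ring
        rw [this, Real.exp_add, hexp]; ring
      rw [h5] at this
      have h6 : ((100:ℝ)/γ^2)^2 ≠ 0 := by positivity
      field_simp at this ⊢
      nlinarith [this]
    have hpowT : (1-η)^T ≤ (γ^2/100)^2 := by
      calc (1-η)^T ≤ Real.exp (-η) ^ T := h1
        _ = Real.exp (-(η*T)) := h2
        _ ≤ Real.exp (-(2*L)) := h3
        _ = (γ^2/100)^2 := h4
    -- conclude b_T ≤ γ²r²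
    have hbT : ‖θ T - θopt‖^2 ≤ γ^2 * r^2 := by
      have hc2 : 100*ropt^2 ≤ 100*r^2 := by nlinarith
      have hpos : (0:ℝ) ≤ 100*ropt^2 := by positivity
      have : (1-η)^T * (100*ropt^2) ≤ (γ^2/100)^2 * (100*r^2) := by
        apply mul_le_mul hpowT hc2 hpos (by positivity)
      rw [hηdef] at h
      nlinarith
    -- finish
    have haT : ‖θ T - θopt‖ ≤ γ * r := by
      nlinarith [sq_nonneg (‖θ T - θopt‖ - γ*r), norm_nonneg (θ T - θopt),
        mul_pos hγ0 hr0]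
    have htri : ‖x - θ T‖ ≤ ‖x - θopt‖ + ‖θ T - θopt‖ := by
      have := norm_sub_le_norm_sub_add_norm_sub x θopt (θ T)
      have h7 : ‖θopt - θ T‖ = ‖θ T - θopt‖ := norm_sub_rev _ _
      linarith
    have hxc := hcov x hx
    linarith
end

section
/- Let θ_opt be a point of a finite-dimensional Euclidean space, let r > 0 and γ ∈ (0,1), let T be an integer with T ≥ (4096/γ²)·ln(484/γ²), and let (θᵗ)_{t=0,…,T} be a random process adapted to a filtration (F_t) on a probability space, with θ⁰ deterministic and ‖θ⁰ − θ_opt‖ ≤ 11·r, such that for every t < T there is a random vector zᵗ with θ^{t+1} = θᵗ + (γ²/2048)·zᵗ, E[⟨θ_opt − θᵗ, zᵗ⟩ | F_t] ≥ (1/4)·‖θᵗ − θ_opt‖² almost surely, and E[‖zᵗ‖² | F_t] ≤ 512·r² almost surely. Then P( ‖θᵀ − θ_opt‖ ≤ γ·r ) ≥ 1/4. -/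
set_option maxHeartbeats 800000

open scoped RealInnerProductSpace
open MeasureTheory

theorem randomized_MMEB_single_run
    {d : ℕ} {Ω : Type*} {m : MeasurableSpace Ω} (P : Measure Ω) [IsProbabilityMeasure P]
    (θopt : EuclideanSpace ℝ (Fin d)) (r γ : ℝ)
    (hr : 0 < r) (hγ0 : 0 < γ) (hγ1 : γ < 1)
    (T : ℕ) (hT : (4096/γ^2) * Real.log (484/γ^2) ≤ T)
    (F : Filtration ℕ m)
    (θ : ℕ → Ω → EuclideanSpace ℝ (Fin d)) (z : ℕ → Ω → EuclideanSpace ℝ (Fin d))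
    (hadapted : Adapted F θ)
    (θ₀ : EuclideanSpace ℝ (Fin d)) (hθ0 : θ 0 = fun _ => θ₀)
    (hinit : ‖θ₀ - θopt‖ ≤ 11 * r)
    (hupd : ∀ t < T, θ (t+1) = fun ω => θ t ω + (γ^2/2048) • z t ω)
    (hint1 : ∀ t < T, Integrable (fun ω => ⟪θopt - θ t ω, z t ω⟫) P)
    (hint2 : ∀ t < T, Integrable (fun ω => ‖z t ω‖^2) P)
    (hmean : ∀ t < T, (fun ω => (1/4) * ‖θ t ω - θopt‖^2)
        ≤ᵐ[P] P[(fun ω => ⟪θopt - θ t ω, z t ω⟫) | F t])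
    (hsec : ∀ t < T, P[(fun ω => ‖z t ω‖^2) | F t] ≤ᵐ[P] fun _ => 512 * r^2) :
    ENNReal.ofReal (1/4) ≤ P {ω | ‖θ T ω - θopt‖ ≤ γ * r} := by
  set η : ℝ := γ^2/2048 with hηdef
  have hγsq : 0 < γ^2 := by positivity
  have hγsq1 : γ^2 < 1 := by nlinarith
  have hηpos : 0 < η := by positivity
  have hηlt : η < 1/2048 := by rw [hηdef]; linarith
  have hq0 : 0 ≤ 1 - η/2 := by linarith
  have hq1 : 1 - η/2 ≤ 1 := by linarith
  -- main induction
  have key : ∀ t, t ≤ T → Integrable (fun ω => ‖θ t ω - θopt‖^2) P ∧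
      ∫ ω, ‖θ t ω - θopt‖^2 ∂P ≤ 121*r^2*(1-η/2)^t + γ^2/2*r^2 := by
    intro t
    induction t with
    | zero =>
      intro _
      rw [hθ0]
      refine ⟨integrable_const _, ?_⟩
      rw [integral_const]
      simp only [measure_univ, probReal_univ, ENNReal.toReal_one, one_smul, pow_zero, mul_one]
      nlinarith [norm_nonneg (θ₀ - θopt), sq_nonneg r]
    | succ t ih =>
      intro ht
      have htT : t < T := Nat.lt_of_succ_le ht
      obtain ⟨ihI, ihB⟩ := ih (le_of_lt htT)
      have hexp : (fun ω => ‖θ (t+1) ω - θopt‖^2) =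
          fun ω => ‖θ t ω - θopt‖^2 - 2*η*⟪θopt - θ t ω, z t ω⟫ + η^2*‖z t ω‖^2 := by
        funext ω
        rw [hupd t htT]
        simp only
        have h1 : θ t ω + η • z t ω - θopt = (θ t ω - θopt) + η • z t ω := by abel
        have h2 : ⟪θopt - θ t ω, z t ω⟫ = -⟪θ t ω - θopt, z t ω⟫ := by
          rw [← neg_sub, inner_neg_left]
        rw [h1, @norm_add_sq_real, real_inner_smul_right, norm_smul, h2]
        simp only [Real.norm_eq_abs, abs_of_pos hηpos]
        ring
      have hI1 : Integrable (fun ω => ‖θ t ω - θopt‖^2 - 2*η*⟪θopt - θ t ω, z t ω⟫) P :=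
        ihI.sub ((hint1 t htT).const_mul (2*η))
      have hI2 : Integrable (fun ω => ‖θ t ω - θopt‖^2 - 2*η*⟪θopt - θ t ω, z t ω⟫
          + η^2*‖z t ω‖^2) P := hI1.add ((hint2 t htT).const_mul (η^2))
      have hI : Integrable (fun ω => ‖θ (t+1) ω - θopt‖^2) P := by
        rw [hexp]; exact hI2
      refine ⟨hI, ?_⟩
      have ha0 : 0 ≤ ∫ ω, ‖θ t ω - θopt‖^2 ∂P :=
        integral_nonneg fun ω => sq_nonneg _
      -- bound on inner product expectation
      have hA : (1/4) * ∫ ω, ‖θ t ω - θopt‖^2 ∂P ≤ ∫ ω, ⟪θopt - θ t ω, z t ω⟫ ∂P := by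
        calc (1/4) * ∫ ω, ‖θ t ω - θopt‖^2 ∂P
            = ∫ ω, (1/4) * ‖θ t ω - θopt‖^2 ∂P := (integral_const_mul _ _).symm
          _ ≤ ∫ ω, (P[(fun ω => ⟪θopt - θ t ω, z t ω⟫) | F t]) ω ∂P :=
              integral_mono_ae (ihI.const_mul _) integrable_condExp (hmean t htT)
          _ = ∫ ω, ⟪θopt - θ t ω, z t ω⟫ ∂P := integral_condExp (F.le t)
      -- bound on second moment
      have hB : ∫ ω, ‖z t ω‖^2 ∂P ≤ 512 * r^2 := by
        calc ∫ ω, ‖z t ω‖^2 ∂P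
            = ∫ ω, (P[(fun ω => ‖z t ω‖^2) | F t]) ω ∂P := (integral_condExp (F.le t)).symm
          _ ≤ ∫ _ω, (512 : ℝ) * r^2 ∂P :=
              integral_mono_ae integrable_condExp (integrable_const _) (hsec t htT)
          _ = 512 * r^2 := by simp
      have hstep : ∫ ω, ‖θ (t+1) ω - θopt‖^2 ∂P ≤
          (1 - η/2) * (∫ ω, ‖θ t ω - θopt‖^2 ∂P) + 512 * η^2 * r^2 := by
        rw [hexp]
        rw [integral_add hI1 ((hint2 t htT).const_mul (η^2)),
          integral_sub ihI ((hint1 t htT).const_mul (2*η)), integral_const_mul, integral_const_mul]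
        nlinarith [sq_nonneg η]
      have hpownn : (0:ℝ) ≤ (1-η/2)^t := pow_nonneg hq0 t
      calc ∫ ω, ‖θ (t+1) ω - θopt‖^2 ∂P
          ≤ (1 - η/2) * (∫ ω, ‖θ t ω - θopt‖^2 ∂P) + 512 * η^2 * r^2 := hstep
        _ ≤ (1 - η/2) * (121*r^2*(1-η/2)^t + γ^2/2*r^2) + 512 * η^2 * r^2 := by
            nlinarith
        _ = 121*r^2*(1-η/2)^(t+1) + γ^2/2*r^2 := by
            have hkey : 512*η^2 = (η/2)*(γ^2/2) := by rw [hηdef]; ring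
            rw [pow_succ]
            linear_combination r^2 * hkey
  obtain ⟨hIT, hBT⟩ := key T le_rfl
  -- bound the geometric term
  have hlogpos : 0 < Real.log (484/γ^2) := by
    apply Real.log_pos
    rw [lt_div_iff₀ hγsq]
    nlinarith
  have hpow : 121*r^2*(1-η/2)^T ≤ γ^2*r^2/4 := by
    have h1 : (1-η/2)^T ≤ Real.exp (-(η/2))^T := by
      apply pow_le_pow_left₀ hq0
      linarith [Real.add_one_le_exp (-(η/2))]
    have h2 : Real.exp (-(η/2))^T = Real.exp (-(η/2) * T) := by
      rw [← Real.exp_nat_mul]; ring_nf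
    have h3 : Real.log (484/γ^2) ≤ (η/2) * T := by
      have := mul_le_mul_of_nonneg_left hT (le_of_lt (by positivity : (0:ℝ) < γ^2/4096))
      have hne : (γ:ℝ)^2 ≠ 0 := ne_of_gt hγsq
      calc Real.log (484/γ^2) = (γ^2/4096) * ((4096/γ^2) * Real.log (484/γ^2)) := by
            field_simp
        _ ≤ (γ^2/4096) * T := this
        _ = (η/2) * T := by rw [hηdef]; ring
    have h4 : Real.exp (-(η/2) * T) ≤ γ^2/484 := by
      have : Real.exp (-(η/2) * T) ≤ Real.exp (-Real.log (484/γ^2)) := by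
        apply Real.exp_le_exp.mpr; linarith
      calc Real.exp (-(η/2) * T) ≤ Real.exp (-Real.log (484/γ^2)) := this
        _ = γ^2/484 := by
            rw [Real.exp_neg, Real.exp_log (by positivity)]
            field_simp
    have hpnn : (0:ℝ) ≤ (1-η/2)^T := pow_nonneg hq0 T
    calc 121*r^2*(1-η/2)^T ≤ 121*r^2*(γ^2/484) := by
          nlinarith [h1, h2.symm ▸ h4, sq_nonneg r]
      _ = γ^2*r^2/4 := by ring
  have hfinal : ∫ ω, ‖θ T ω - θopt‖^2 ∂P ≤ 3/4 * (γ^2*r^2) := by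
    calc ∫ ω, ‖θ T ω - θopt‖^2 ∂P ≤ 121*r^2*(1-η/2)^T + γ^2/2*r^2 := hBT
      _ ≤ γ^2*r^2/4 + γ^2/2*r^2 := by linarith
      _ = 3/4 * (γ^2*r^2) := by ring
  -- Markov
  have hεpos : 0 < γ^2 * r^2 := by positivity
  have markov := mul_meas_ge_le_integral_of_nonneg
    (Filter.Eventually.of_forall fun ω => sq_nonneg (‖θ T ω - θopt‖)) hIT (γ^2*r^2)
  have htoReal : (P {ω | γ^2*r^2 ≤ ‖θ T ω - θopt‖^2}).toReal ≤ 3/4 := by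
    have h := le_trans markov hfinal
    rw [measureReal_def] at h
    nlinarith [h, hεpos, ENNReal.toReal_nonneg (a := P {ω | γ^2*r^2 ≤ ‖θ T ω - θopt‖^2})]
  have hPle : P {ω | γ^2*r^2 ≤ ‖θ T ω - θopt‖^2} ≤ ENNReal.ofReal (3/4) := by
    rw [← ENNReal.ofReal_toReal (measure_ne_top P _)]
    exact ENNReal.ofReal_le_ofReal htoReal
  have hmeasθ : Measurable (θ T) := (hadapted T).mono (F.le T) le_rfl
  have hmeasset : MeasurableSet {ω | γ^2*r^2 ≤ ‖θ T ω - θopt‖^2} := by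
    apply measurableSet_le measurable_const
    exact ((hmeasθ.sub_const θopt).norm.pow_const 2)
  have hsubset : {ω | γ^2*r^2 ≤ ‖θ T ω - θopt‖^2}ᶜ ⊆ {ω | ‖θ T ω - θopt‖ ≤ γ * r} := by
    intro ω hω
    simp only [Set.mem_compl_iff, Set.mem_setOf_eq, not_le] at hω ⊢
    have hpos : 0 < ‖θ T ω - θopt‖ + γ*r := by positivity
    nlinarith [norm_nonneg (θ T ω - θopt), hpos]
  calc ENNReal.ofReal (1/4) = 1 - ENNReal.ofReal (3/4) := by
        rw [show (1:ENNReal) = ENNReal.ofReal 1 by simp, ← ENNReal.ofReal_sub _ (by norm_num)]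
        norm_num
    _ ≤ 1 - P {ω | γ^2*r^2 ≤ ‖θ T ω - θopt‖^2} := tsub_le_tsub_left hPle 1
    _ = P ({ω | γ^2*r^2 ≤ ‖θ T ω - θopt‖^2}ᶜ) := (prob_compl_eq_one_sub hmeasset).symm
    _ ≤ P {ω | ‖θ T ω - θopt‖ ≤ γ * r} := measure_mono hsubset
end

section
/- Let θ, θ_opt, μ, Δ be points of a Euclidean space, let r_opt > 0, r ∈ [r_opt, 4·r_opt], and γ ∈ (0,1). Assume ⟨θ − θ_opt, μ − θ_opt⟩ ≤ (1/2)·‖θ − θ_opt‖², ‖μ − θ_opt‖ ≤ r_opt, ‖Δ‖ ≤ γ·r_opt/4, and ‖θ − θ_opt‖ ≥ γ·r_opt. Then the point θ' := (1 − γ²/8)·θ + (γ²/8)·(μ + Δ) satisfies ‖θ' − θ_opt‖² ≤ (1 − γ²/64)·‖θ − θ_opt‖². -/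
open scoped RealInnerProductSpace

set_option maxHeartbeats 1600000

theorem noisy_step_geometric_decrease
    {E : Type*} [NormedAddCommGroup E] [InnerProductSpace ℝ E]
    (θ θopt μ Δ : E) (ropt r γ : ℝ) (hropt : 0 < ropt)
    (hr1 : ropt ≤ r) (hr2 : r ≤ 4 * ropt) (hγ0 : 0 < γ) (hγ1 : γ < 1)
    (hproj : ⟪θ - θopt, μ - θopt⟫ ≤ (1/2) * ‖θ - θopt‖^2)
    (hμ : ‖μ - θopt‖ ≤ ropt)
    (hΔ : ‖Δ‖ ≤ γ * ropt / 4)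
    (hfar : γ * ropt ≤ ‖θ - θopt‖) :
    ‖((1 - γ^2/8) • θ + (γ^2/8) • (μ + Δ)) - θopt‖^2 ≤
      (1 - γ^2/64) * ‖θ - θopt‖^2 := by
  set a := θ - θopt with ha
  set b := μ + Δ - θopt with hb
  have hrw : ((1 - γ^2/8) • θ + (γ^2/8) • (μ + Δ)) - θopt
      = (1 - γ^2/8) • a + (γ^2/8) • b := by
    rw [ha, hb]; module
  rw [hrw]
  have hexp : ‖(1 - γ^2/8) • a + (γ^2/8) • b‖^2
      = (1 - γ^2/8)^2 * ‖a‖^2 + 2 * ((1 - γ^2/8) * (γ^2/8)) * ⟪a, b⟫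
        + (γ^2/8)^2 * ‖b‖^2 := by
    rw [@norm_add_sq_real, norm_smul, norm_smul, real_inner_smul_left,
      real_inner_smul_right, mul_pow, mul_pow]
    have h1 : 0 ≤ 1 - γ^2/8 := by nlinarith
    have h2 : (0:ℝ) ≤ γ^2/8 := by positivity
    rw [Real.norm_of_nonneg h1, Real.norm_of_nonneg h2]
    ring
  rw [hexp]
  have hbab : b = (μ - θopt) + Δ := by rw [hb]; abel
  have hp : ⟪a, b⟫ ≤ (3/4) * ‖a‖^2 := by
    rw [hbab, inner_add_right]
    have h1 : ⟪a, Δ⟫ ≤ ‖a‖ * ‖Δ‖ := real_inner_le_norm a Δ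
    have h2 : ‖a‖ * ‖Δ‖ ≤ ‖a‖ * (γ * ropt / 4) :=
      mul_le_mul_of_nonneg_left hΔ (norm_nonneg a)
    have h3 : γ * ropt / 4 ≤ ‖a‖ / 4 := by linarith
    nlinarith [norm_nonneg a, hproj]
  have ht : ‖b‖ ≤ (5/4) * ropt := by
    rw [hbab]
    calc ‖(μ - θopt) + Δ‖ ≤ ‖μ - θopt‖ + ‖Δ‖ := norm_add_le _ _
    _ ≤ ropt + γ * ropt / 4 := by linarith
    _ ≤ (5/4) * ropt := by nlinarith
  have hgt : γ * ‖b‖ ≤ (5/4) * ‖a‖ := by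
    have : γ * ‖b‖ ≤ γ * ((5/4) * ropt) := mul_le_mul_of_nonneg_left ht hγ0.le
    nlinarith
  have hbsq : γ^2 * ‖b‖^2 ≤ (25/16) * ‖a‖^2 := by
    nlinarith [norm_nonneg b, norm_nonneg a, mul_nonneg hγ0.le (norm_nonneg b)]
  have hγ2 : γ^2 ≤ 1 := by nlinarith
  have hη : (0:ℝ) ≤ 2 * ((1 - γ^2/8) * (γ^2/8)) := by clear hexp hp hbsq hproj; nlinarith [sq_nonneg γ]
  have h2' : 2 * ((1 - γ^2/8) * (γ^2/8)) * ⟪a, b⟫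
      ≤ 2 * ((1 - γ^2/8) * (γ^2/8)) * ((3/4) * ‖a‖^2) :=
    mul_le_mul_of_nonneg_left hp hη
  have h3' : (γ^2/8)^2 * ‖b‖^2 ≤ (25/1024) * (γ^2 * ‖a‖^2) := by
    have := mul_le_mul_of_nonneg_left hbsq (by positivity : (0:ℝ) ≤ γ^2/64)
    nlinarith
  nlinarith [h2', h3', mul_nonneg (sq_nonneg γ) (sq_nonneg ‖a‖),
    mul_nonneg (mul_nonneg (sq_nonneg γ) (sq_nonneg γ)) (sq_nonneg ‖a‖)]
end

section
/- Let θ, θ_opt, μ, Δ be points of a Euclidean space, let r_opt > 0 and γ ∈ (0,1). Assume ⟨θ − θ_opt, μ − θ_opt⟩ ≤ (1/2)·‖θ − θ_opt‖², ‖μ − θ_opt‖ ≤ r_opt, ‖Δ‖ ≤ γ·r_opt/4, and ‖θ − θ_opt‖ < γ·r_opt. Then the point θ' := (1 − γ²/8)·θ + (γ²/8)·(μ + Δ) satisfies ‖θ' − θ_opt‖² ≤ (1 − γ²/64)·γ²·r_opt², and in particular ‖θ' − θ_opt‖ < γ·r_opt. -/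
open scoped RealInnerProductSpace

private lemma noisy_step_aux (η R s p q c : ℝ) (hη0 : 0 < η) (hη1 : η ≤ 1/8)
    (hs0 : 0 ≤ s) (hs : s ≤ R) (hp : p ≤ s/2) (hq : q ≤ R/4)
    (hc : c ≤ 25/128 * η * R) :
    (1 - η)^2 * s + 2 * ((1 - η) * η * (p + q)) + c ≤ (1 - η/8) * R := by
  have hR0 : 0 ≤ R := le_trans hs0 hs
  nlinarith [mul_nonneg (le_of_lt hη0) hR0, mul_nonneg (le_of_lt hη0) hs0,
    mul_nonneg (mul_nonneg (le_of_lt hη0) (le_of_lt hη0)) hR0,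
    mul_le_mul_of_nonneg_left hs (by nlinarith : (0:ℝ) ≤ (1-η)),
    mul_le_mul_of_nonneg_left hp (by nlinarith : (0:ℝ) ≤ 2*(1-η)*η),
    mul_le_mul_of_nonneg_left hq (by nlinarith : (0:ℝ) ≤ 2*(1-η)*η)]

set_option maxHeartbeats 1600000 in
theorem noisy_step_stability
    {E : Type*} [NormedAddCommGroup E] [InnerProductSpace ℝ E]
    (θ θopt μ Δ : E) (ropt γ : ℝ) (hropt : 0 < ropt) (hγ0 : 0 < γ) (hγ1 : γ < 1)
    (hproj : ⟪θ - θopt, μ - θopt⟫ ≤ (1/2) * ‖θ - θopt‖^2)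
    (hμ : ‖μ - θopt‖ ≤ ropt)
    (hΔ : ‖Δ‖ ≤ γ * ropt / 4)
    (hclose : ‖θ - θopt‖ < γ * ropt) :
    ‖((1 - γ^2/8) • θ + (γ^2/8) • (μ + Δ)) - θopt‖^2 ≤
        (1 - γ^2/64) * γ^2 * ropt^2 ∧
      ‖((1 - γ^2/8) • θ + (γ^2/8) • (μ + Δ)) - θopt‖ < γ * ropt := by
  set a := θ - θopt with ha
  set b := μ - θopt with hb
  have hrw : ((1 - γ^2/8) • θ + (γ^2/8) • (μ + Δ)) - θopt
      = (1 - γ^2/8) • a + (γ^2/8) • (b + Δ) := by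
    rw [ha, hb]; module
  have hη0 : (0:ℝ) < γ^2/8 := by positivity
  have hη1 : γ^2/8 ≤ 1/8 := by nlinarith
  have hs0 : 0 ≤ ‖a‖ := norm_nonneg _
  have hexp : ‖(1 - γ^2/8) • a + (γ^2/8) • (b + Δ)‖^2
      = (1 - γ^2/8)^2 * ‖a‖^2
        + 2 * ((1 - γ^2/8) * (γ^2/8) * (⟪a, b⟫ + ⟪a, Δ⟫))
        + (γ^2/8)^2 * ‖b + Δ‖^2 := by
    rw [norm_add_sq_real, real_inner_smul_left, real_inner_smul_right,
      inner_add_right, norm_smul, norm_smul, mul_pow, mul_pow]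
    simp [abs_of_nonneg, abs_of_pos hη0, abs_of_nonneg (by nlinarith : (0:ℝ) ≤ 1 - γ^2/8)]
    ring
  have hs : ‖a‖^2 ≤ γ^2 * ropt^2 := by nlinarith
  have hp : ⟪a, b⟫ ≤ ‖a‖^2 / 2 := by linarith
  have hq : ⟪a, Δ⟫ ≤ γ^2 * ropt^2 / 4 := by
    have h := real_inner_le_norm a Δ
    have h2 : ‖a‖ * ‖Δ‖ ≤ (γ * ropt) * (γ * ropt / 4) :=
      mul_le_mul (le_of_lt hclose) hΔ (norm_nonneg _) (by positivity)
    nlinarith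
  have hc : (γ^2/8)^2 * ‖b + Δ‖^2 ≤ 25/128 * (γ^2/8) * (γ^2 * ropt^2) := by
    have h1 : ‖b + Δ‖ ≤ 5/4 * ropt := by
      have := norm_add_le b Δ
      nlinarith
    have h2 : ‖b + Δ‖^2 ≤ 25/16 * ropt^2 := by nlinarith [norm_nonneg (b + Δ)]
    calc (γ^2/8)^2 * ‖b + Δ‖^2 ≤ (γ^2/8)^2 * (25/16 * ropt^2) :=
          mul_le_mul_of_nonneg_left h2 (by positivity)
      _ = 25/128 * (γ^2/8) * (γ^2 * ropt^2) := by ring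
  have hmain : ‖(1 - γ^2/8) • a + (γ^2/8) • (b + Δ)‖^2
      ≤ (1 - γ^2/64) * γ^2 * ropt^2 := by
    rw [hexp]
    have := noisy_step_aux (γ^2/8) (γ^2 * ropt^2) (‖a‖^2) ⟪a, b⟫ ⟪a, Δ⟫
      ((γ^2/8)^2 * ‖b + Δ‖^2) hη0 hη1 (sq_nonneg _) hs hp hq hc
    calc _ ≤ (1 - (γ^2/8)/8) * (γ^2 * ropt^2) := this
      _ = (1 - γ^2/64) * γ^2 * ropt^2 := by ring
  rw [hrw]
  refine ⟨hmain, ?_⟩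
  have h4 : ‖(1 - γ^2/8) • a + (γ^2/8) • (b + Δ)‖^2 < (γ * ropt)^2 := by
    have hpos : 0 < γ^2/64 * (γ^2 * ropt^2) := by positivity
    nlinarith
  exact lt_of_pow_lt_pow_left₀ 2 (by positivity) h4
end

section
/- Let P be a nonempty finite set of points in a Euclidean space contained in the ball B(θ_opt, r_opt) with r_opt > 0, let γ ∈ (0,1), let r ∈ [r_opt, 4·r_opt], and let θ : ℕ → the space be a sequence with ‖θ⁰ − θ_opt‖ ≤ 10·r_opt such that for every t: if P ⊆ B(θᵗ, r) then θ^{t+1} = θᵗ, and otherwise θ^{t+1} = (1 − γ²/8)·θᵗ + (γ²/8)·(μᵗ + Δᵗ), where μᵗ is the mean of the set {x ∈ P : ‖x − θᵗ‖ > r} and Δᵗ is a vector with ‖Δᵗ‖ ≤ γ·r/16. Then after at most T' = ⌈(64/γ²)·ln(100/γ²)⌉ iterations there is some t ≤ T' with either P ⊆ B(θᵗ, r) or ‖θᵗ − θ_opt‖ ≤ γ·r_opt; in particular P ⊆ B(θ^{T'}, (1+γ)·r). -/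
open scoped RealInnerProductSpace

/-- Pure arithmetic core of the one-step contraction estimate. -/
lemma noisy_MMEB_step_arith (a b g M : ℝ) (ha : 0 ≤ a) (hb : 0 < b)
    (hg0 : 0 < g) (hg1 : g < 1)
    (h1 : a^2 ≤ M) (h2 : g^2*b^2 ≤ M) (h3 : a*(g*b) ≤ M) :
    (1-g^2/8)^2*a^2 + 2*((1-g^2/8)*(g^2/8))*(a^2/2 + a*(g*b)/4)
      + (g^2/8)^2*((5/4)*b)^2 ≤ (1-g^2/64)*M := by
  have hg2 : 0 < g^2 := by positivity
  have hglt : g^2 ≤ 1 := by nlinarith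
  have hM0 : 0 ≤ M := le_trans (sq_nonneg a) h1
  have e1 : (0:ℝ) ≤ (1-g^2/8)^2 + (1-g^2/8)*(g^2/8) := by nlinarith
  have e2 : (0:ℝ) ≤ (1-g^2/8)*(g^2/8)/2 := by nlinarith
  have e3 : (0:ℝ) ≤ 25/1024*g^2 := by positivity
  have b1 := mul_le_mul_of_nonneg_left h1 e1
  have b2 := mul_le_mul_of_nonneg_left h3 e2
  have b3 := mul_le_mul_of_nonneg_left h2 e3
  have hfin : (1 - 39/1024*g^2 - g^4/128) * M ≤ (1-g^2/64)*M := by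
    nlinarith [mul_nonneg (mul_nonneg hg2.le hg2.le) hM0, mul_nonneg hg2.le hM0]
  nlinarith [b1, b2, b3, hfin]

set_option maxHeartbeats 1000000 in
theorem noisy_MMEB_convergence
    {E : Type*} [NormedAddCommGroup E] [InnerProductSpace ℝ E]
    (P : Finset E) (hP : P.Nonempty)
    (θopt : E) (ropt : ℝ) (hropt : 0 < ropt)
    (hcov : ∀ x ∈ P, ‖x - θopt‖ ≤ ropt)
    (γ : ℝ) (hγ0 : 0 < γ) (hγ1 : γ < 1)
    (r : ℝ) (hr1 : ropt ≤ r) (hr2 : r ≤ 4 * ropt)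
    (θ : ℕ → E) (hθ0 : ‖θ 0 - θopt‖ ≤ 10 * ropt)
    (Δ : ℕ → E) (hΔ : ∀ t, ‖Δ t‖ ≤ γ * r / 16)
    (hstop : ∀ t, (∀ x ∈ P, ‖x - θ t‖ ≤ r) → θ (t+1) = θ t)
    (hstep : ∀ t, ¬ (∀ x ∈ P, ‖x - θ t‖ ≤ r) →
      θ (t+1) = (1 - γ^2/8) • θ t + (γ^2/8) •
        (((((P.filter (fun x => r < ‖x - θ t‖)).card : ℝ))⁻¹ •
          ∑ x ∈ P.filter (fun x => r < ‖x - θ t‖), x) + Δ t)) :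
    (∃ t ≤ ⌈(64/γ^2) * Real.log (100/γ^2)⌉₊,
        (∀ x ∈ P, ‖x - θ t‖ ≤ r) ∨ ‖θ t - θopt‖ ≤ γ * ropt) ∧
      ∀ x ∈ P, ‖x - θ (⌈(64/γ^2) * Real.log (100/γ^2)⌉₊)‖ ≤ (1+γ) * r := by
  have hr0 : 0 < r := lt_of_lt_of_le hropt hr1
  have hγ2 : (0:ℝ) < γ^2 := by positivity
  -- the one-step contraction estimate
  have key : ∀ t, ¬ (∀ x ∈ P, ‖x - θ t‖ ≤ r) →
      ‖θ (t+1) - θopt‖^2 ≤ (1-γ^2/64) * max (‖θ t - θopt‖^2) (γ^2*ropt^2) := by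
    intro t hnc
    obtain ⟨x0, hx0P, hx0⟩ : ∃ x ∈ P, r < ‖x - θ t‖ := by push_neg at hnc; exact hnc
    set S : Finset E := P.filter (fun x => r < ‖x - θ t‖) with hS_def
    have hS : S.Nonempty := ⟨x0, Finset.mem_filter.mpr ⟨hx0P, hx0⟩⟩
    have hn : (0:ℝ) < (S.card : ℝ) := by exact_mod_cast Finset.card_pos.mpr hS
    set n : ℝ := (S.card : ℝ) with hn_def
    set μ : E := n⁻¹ • ∑ x ∈ S, x with hμ_def
    set v : E := θ t - θopt with hv_def
    set η : ℝ := γ^2/8 with hη_def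
    have hsub : ∀ z : E, μ - z = n⁻¹ • ∑ x ∈ S, (x - z) := by
      intro z
      rw [Finset.sum_sub_distrib, smul_sub, Finset.sum_const,
        ← Nat.cast_smul_eq_nsmul ℝ, smul_smul, inv_mul_cancel₀ hn.ne', one_smul, hμ_def]
    have hμopt : ‖μ - θopt‖ ≤ ropt := by
      rw [hsub θopt, norm_smul]
      have hle : ‖∑ x ∈ S, (x - θopt)‖ ≤ n * ropt := by
        calc ‖∑ x ∈ S, (x - θopt)‖ ≤ ∑ x ∈ S, ‖x - θopt‖ := norm_sum_le _ _
          _ ≤ ∑ x ∈ S, ropt := by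
              refine Finset.sum_le_sum ?_
              intro x hx
              exact hcov x (Finset.mem_filter.mp hx).1
          _ = n * ropt := by rw [Finset.sum_const, nsmul_eq_mul]
      have : ‖(n:ℝ)⁻¹‖ = n⁻¹ := by
        rw [Real.norm_eq_abs, abs_of_nonneg (by positivity)]
      rw [this]
      calc n⁻¹ * ‖∑ x ∈ S, (x - θopt)‖ ≤ n⁻¹ * (n * ropt) :=
            mul_le_mul_of_nonneg_left hle (by positivity)
        _ = ropt := by field_simp
    have hinner : ⟪v, μ - θ t⟫ ≤ -(‖v‖^2/2) := by
      have hx : ∀ x ∈ S, ⟪v, x - θ t⟫ ≤ -(‖v‖^2/2) := by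
        intro x hx
        have hxr : r < ‖x - θ t‖ := (Finset.mem_filter.mp hx).2
        have hxP : x ∈ P := (Finset.mem_filter.mp hx).1
        have hdecomp : x - θopt = (x - θ t) + v := by rw [hv_def]; abel
        have hid : ‖x - θopt‖^2 = ‖x - θ t‖^2 + 2*⟪x - θ t, v⟫ + ‖v‖^2 := by
          rw [hdecomp, norm_add_sq_real]
        have h1 : ‖x - θopt‖^2 ≤ ropt^2 :=
          pow_le_pow_left₀ (norm_nonneg _) (hcov x hxP) 2
        have h2 : r^2 ≤ ‖x - θ t‖^2 := pow_le_pow_left₀ hr0.le hxr.le 2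
        have h3 : ropt^2 ≤ r^2 := pow_le_pow_left₀ hropt.le hr1 2
        rw [real_inner_comm]
        linarith
      have heq : μ - θ t = n⁻¹ • ∑ x ∈ S, (x - θ t) := hsub (θ t)
      rw [heq, real_inner_smul_right, inner_sum]
      have hsum : ∑ x ∈ S, ⟪v, x - θ t⟫ ≤ n * (-(‖v‖^2/2)) := by
        calc ∑ x ∈ S, ⟪v, x - θ t⟫ ≤ ∑ _x ∈ S, (-(‖v‖^2/2)) := Finset.sum_le_sum hx
          _ = n * (-(‖v‖^2/2)) := by rw [Finset.sum_const, nsmul_eq_mul]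
      calc n⁻¹ * ∑ x ∈ S, ⟪v, x - θ t⟫ ≤ n⁻¹ * (n * (-(‖v‖^2/2))) :=
            mul_le_mul_of_nonneg_left hsum (by positivity)
        _ = -(‖v‖^2/2) := by field_simp
    -- the noise bound in terms of ropt
    have hΔ' : ‖Δ t‖ ≤ γ * ropt / 4 := by
      have := hΔ t
      nlinarith [hγ0.le]
    set w : E := μ + Δ t - θopt with hw_def
    have hwnorm : ‖w‖ ≤ (5/4) * ropt := by
      have : w = (μ - θopt) + Δ t := by rw [hw_def]; abel
      rw [this]
      calc ‖(μ - θopt) + Δ t‖ ≤ ‖μ - θopt‖ + ‖Δ t‖ := norm_add_le _ _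
        _ ≤ ropt + γ * ropt / 4 := add_le_add hμopt hΔ'
        _ ≤ (5/4) * ropt := by nlinarith
    have hvw : ⟪v, w⟫ ≤ ‖v‖^2/2 + ‖v‖*(γ*ropt)/4 := by
      have hwdec : w = (μ - θ t) + v + Δ t := by rw [hw_def, hv_def]; abel
      rw [hwdec, inner_add_right, inner_add_right, real_inner_self_eq_norm_sq]
      have h3 : ⟪v, Δ t⟫ ≤ ‖v‖ * (γ*ropt/4) := by
        calc ⟪v, Δ t⟫ ≤ ‖v‖ * ‖Δ t‖ := real_inner_le_norm _ _
          _ ≤ ‖v‖ * (γ*ropt/4) := mul_le_mul_of_nonneg_left hΔ' (norm_nonneg _)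
      linarith
    have hvp : θ (t+1) - θopt = (1-η) • v + η • w := by
      rw [hstep t hnc, hw_def, hv_def, hη_def]
      rw [← hS_def, ← hn_def, ← hμ_def]
      module
    have hη1 : η ≤ 1/8 := by rw [hη_def]; nlinarith
    have hη0 : 0 ≤ η := by rw [hη_def]; positivity
    have hexp : ‖θ (t+1) - θopt‖^2
        = (1-η)^2*‖v‖^2 + 2*((1-η)*η)*⟪v, w⟫ + η^2*‖w‖^2 := by
      rw [hvp, norm_add_sq_real, real_inner_smul_left, real_inner_smul_right,
        norm_smul, norm_smul, Real.norm_eq_abs, Real.norm_eq_abs,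
        abs_of_nonneg (by linarith : (0:ℝ) ≤ 1-η), abs_of_nonneg hη0]
      ring
    set M : ℝ := max (‖v‖^2) (γ^2*ropt^2) with hM_def
    have hM1 : ‖v‖^2 ≤ M := le_max_left _ _
    have hM2 : γ^2*ropt^2 ≤ M := le_max_right _ _
    have hM3 : ‖v‖*(γ*ropt) ≤ M := by
      rcases le_total ‖v‖ (γ*ropt) with h | h
      · calc ‖v‖*(γ*ropt) ≤ (γ*ropt)*(γ*ropt) :=
              mul_le_mul_of_nonneg_right h (by positivity)
          _ = γ^2*ropt^2 := by ring
          _ ≤ M := hM2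
      · calc ‖v‖*(γ*ropt) ≤ ‖v‖*‖v‖ :=
              mul_le_mul_of_nonneg_left h (norm_nonneg _)
          _ = ‖v‖^2 := by ring
          _ ≤ M := hM1
    have harith := noisy_MMEB_step_arith ‖v‖ ropt γ M (norm_nonneg _) hropt hγ0 hγ1
      hM1 hM2 hM3
    have hmid : 2*((1-η)*η)*⟪v, w⟫ ≤ 2*((1-η)*η)*(‖v‖^2/2 + ‖v‖*(γ*ropt)/4) := by
      apply mul_le_mul_of_nonneg_left hvw
      nlinarith
    have hlast : η^2*‖w‖^2 ≤ η^2*((5/4)*ropt)^2 := by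
      apply mul_le_mul_of_nonneg_left _ (by positivity)
      exact pow_le_pow_left₀ (norm_nonneg _) hwnorm 2
    calc ‖θ (t+1) - θopt‖^2
        = (1-η)^2*‖v‖^2 + 2*((1-η)*η)*⟪v, w⟫ + η^2*‖w‖^2 := hexp
      _ ≤ (1-η)^2*‖v‖^2 + 2*((1-η)*η)*(‖v‖^2/2 + ‖v‖*(γ*ropt)/4)
          + η^2*((5/4)*ropt)^2 := by linarith
      _ = (1-γ^2/8)^2*‖v‖^2 + 2*((1-γ^2/8)*(γ^2/8))*(‖v‖^2/2 + ‖v‖*(γ*ropt)/4)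
          + (γ^2/8)^2*((5/4)*ropt)^2 := by rw [hη_def]
      _ ≤ (1-γ^2/64)*M := harith
  -- once covered, the iterate freezes
  have frozen : ∀ s t, s ≤ t → (∀ x ∈ P, ‖x - θ s‖ ≤ r) → θ t = θ s := by
    intro s t hst hc
    induction t, hst using Nat.le_induction with
    | base => rfl
    | succ t hst ih =>
      rw [hstop t (fun x hx => by rw [ih]; exact hc x hx), ih]
  -- the main decrease invariant
  have hdec : ∀ t, (∃ s ≤ t, ∀ x ∈ P, ‖x - θ s‖ ≤ r) ∨
      ‖θ t - θopt‖^2 ≤ max ((1-γ^2/64)^t * ‖θ 0 - θopt‖^2) (γ^2*ropt^2) := by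
    intro t
    induction t with
    | zero => right; simpa using le_max_left (‖θ 0 - θopt‖^2) (γ^2*ropt^2)
    | succ t ih =>
      by_cases hc : ∀ x ∈ P, ‖x - θ t‖ ≤ r
      · left; exact ⟨t, Nat.le_succ t, hc⟩
      · rcases ih with ⟨s, hs, h⟩ | ih
        · left; exact ⟨s, hs.trans (Nat.le_succ t), h⟩
        · right
          have hc0 : (0:ℝ) ≤ 1 - γ^2/64 := by nlinarith
          have h1 := key t hc
          have h2 : max (‖θ t - θopt‖^2) (γ^2*ropt^2)
              ≤ max ((1-γ^2/64)^t * ‖θ 0 - θopt‖^2) (γ^2*ropt^2) :=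
            max_le ih (le_max_right _ _)
          have h3 : (1-γ^2/64) * max ((1-γ^2/64)^t * ‖θ 0 - θopt‖^2) (γ^2*ropt^2)
              ≤ max ((1-γ^2/64)^(t+1) * ‖θ 0 - θopt‖^2) (γ^2*ropt^2) := by
            rcases le_total ((1-γ^2/64)^t * ‖θ 0 - θopt‖^2) (γ^2*ropt^2) with h | h
            · rw [max_eq_right h]
              refine le_trans ?_ (le_max_right _ _)
              nlinarith [mul_nonneg (mul_nonneg hγ2.le hγ2.le) (sq_nonneg ropt)]
            · rw [max_eq_left h]
              refine le_trans ?_ (le_max_left _ _)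
              rw [pow_succ]
              exact le_of_eq (by ring)
          calc ‖θ (t+1) - θopt‖^2 ≤ (1-γ^2/64) * max (‖θ t - θopt‖^2) (γ^2*ropt^2) := h1
            _ ≤ (1-γ^2/64) * max ((1-γ^2/64)^t * ‖θ 0 - θopt‖^2) (γ^2*ropt^2) :=
                mul_le_mul_of_nonneg_left h2 hc0
            _ ≤ max ((1-γ^2/64)^(t+1) * ‖θ 0 - θopt‖^2) (γ^2*ropt^2) := h3
  set T : ℕ := ⌈(64/γ^2) * Real.log (100/γ^2)⌉₊ with hT_def
  -- the power bound
  have hcT : (1-γ^2/64)^T * ‖θ 0 - θopt‖^2 ≤ γ^2*ropt^2 := by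
    have hc0 : (0:ℝ) ≤ 1 - γ^2/64 := by nlinarith
    have hΦ0 : ‖θ 0 - θopt‖^2 ≤ 100*ropt^2 := by
      nlinarith [norm_nonneg (θ 0 - θopt)]
    have hpow : (1-γ^2/64)^T ≤ γ^2/100 := by
      have h1 : (1-γ^2/64)^T ≤ (Real.exp (-(γ^2/64)))^T :=
        pow_le_pow_left₀ hc0 (by linarith [Real.add_one_le_exp (-(γ^2/64))]) T
      have h2 : (Real.exp (-(γ^2/64)))^T = Real.exp ((T:ℝ) * (-(γ^2/64))) :=
        (Real.exp_nat_mul _ T).symm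
      have hceil : (64/γ^2) * Real.log (100/γ^2) ≤ (T:ℝ) := Nat.le_ceil _
      have h3 : Real.log (100/γ^2) ≤ (T:ℝ) * (γ^2/64) := by
        have := mul_le_mul_of_nonneg_left hceil (by positivity : (0:ℝ) ≤ γ^2/64)
        calc Real.log (100/γ^2)
            = (γ^2/64) * ((64/γ^2) * Real.log (100/γ^2)) := by field_simp
          _ ≤ (γ^2/64) * (T:ℝ) := this
          _ = (T:ℝ) * (γ^2/64) := by ring
      have h4 : Real.exp ((T:ℝ) * (-(γ^2/64))) ≤ Real.exp (-(Real.log (100/γ^2))) := by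
        apply Real.exp_le_exp.mpr
        linarith
      have h5 : Real.exp (-(Real.log (100/γ^2))) = γ^2/100 := by
        rw [Real.exp_neg, Real.exp_log (by positivity), inv_div]
      calc (1-γ^2/64)^T ≤ (Real.exp (-(γ^2/64)))^T := h1
        _ = Real.exp ((T:ℝ) * (-(γ^2/64))) := h2
        _ ≤ Real.exp (-(Real.log (100/γ^2))) := h4
        _ = γ^2/100 := h5
    calc (1-γ^2/64)^T * ‖θ 0 - θopt‖^2 ≤ (γ^2/100) * (100*ropt^2) :=
          mul_le_mul hpow hΦ0 (sq_nonneg _) (by positivity)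
      _ = γ^2*ropt^2 := by ring
  rcases hdec T with ⟨s, hs, hcs⟩ | hb
  · refine ⟨⟨s, hs, Or.inl hcs⟩, ?_⟩
    intro x hx
    rw [frozen s T hs hcs]
    calc ‖x - θ s‖ ≤ r := hcs x hx
      _ ≤ (1+γ) * r := by nlinarith
  · have hbb : ‖θ T - θopt‖^2 ≤ γ^2*ropt^2 := le_trans hb (max_le hcT le_rfl)
    have hnm : ‖θ T - θopt‖ ≤ γ * ropt := by
      nlinarith [norm_nonneg (θ T - θopt), mul_pos hγ0 hropt]
    refine ⟨⟨T, le_rfl, Or.inr hnm⟩, ?_⟩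
    intro x hx
    have hdx : x - θ T = (x - θopt) + (θopt - θ T) := by abel
    calc ‖x - θ T‖ = ‖(x - θopt) + (θopt - θ T)‖ := by rw [← hdx]
      _ ≤ ‖x - θopt‖ + ‖θopt - θ T‖ := norm_add_le _ _
      _ = ‖x - θopt‖ + ‖θ T - θopt‖ := by rw [norm_sub_rev θopt (θ T)]
      _ ≤ ropt + γ * ropt := add_le_add (hcov x hx) hnm
      _ ≤ (1+γ) * r := by nlinarith
end

section
/- Let θ_opt, θᵗ be points of a Euclidean space, let S be a nonempty finite set of points each satisfying ⟨θᵗ − θ_opt, x − θ_opt⟩ ≤ (1/2)·‖θᵗ − θ_opt‖² for x ∈ S, let n_w = |S|, let c be a real number with |c| ≤ n_w/44, and let v = (n_w/(n_w + c)) · ((1/n_w)·Σ_{x∈S}(x − θᵗ)). Then ⟨θ_opt − θᵗ, v⟩ ≥ (1/4)·‖θᵗ − θ_opt‖². -/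
open scoped RealInnerProductSpace

theorem noisy_count_projection_bound
    {E : Type*} [NormedAddCommGroup E] [InnerProductSpace ℝ E]
    (θopt θt : E) (S : Finset E) (hS : S.Nonempty)
    (hproj : ∀ x ∈ S, ⟪θt - θopt, x - θopt⟫ ≤ (1/2) * ‖θt - θopt‖^2)
    (c : ℝ) (hc : |c| ≤ (S.card : ℝ) / 44) :
    (1/4) * ‖θt - θopt‖^2 ≤
      ⟪θopt - θt, ((S.card : ℝ) / ((S.card : ℝ) + c)) •
        (((S.card : ℝ))⁻¹ • ∑ x ∈ S, (x - θt))⟫ := by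
  have hn : (0:ℝ) < S.card := by exact_mod_cast hS.card_pos
  obtain ⟨hc1, hc2⟩ := abs_le.mp hc
  have hnc : (0:ℝ) < (S.card : ℝ) + c := by linarith
  have hN : (0:ℝ) ≤ ‖θt - θopt‖^2 := by positivity
  have hterm : ∀ x ∈ S, (1/2) * ‖θt - θopt‖^2 ≤ ⟪θopt - θt, x - θt⟫ := by
    intro x hx
    have h := hproj x hx
    have hx' : x - θt = (x - θopt) + (θopt - θt) := by abel
    rw [hx', inner_add_right]
    have h1 : ⟪θopt - θt, x - θopt⟫ = -⟪θt - θopt, x - θopt⟫ := by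
      rw [← neg_sub θopt θt, inner_neg_left, neg_neg]
    have h2 : ⟪θopt - θt, θopt - θt⟫ = ‖θt - θopt‖^2 := by
      rw [real_inner_self_eq_norm_sq, ← norm_neg, neg_sub]
    rw [h1, h2]; linarith
  have hsum : (S.card : ℝ) * ((1/2) * ‖θt - θopt‖^2) ≤ ⟪θopt - θt, ∑ x ∈ S, (x - θt)⟫ := by
    rw [inner_sum]
    calc (S.card : ℝ) * ((1/2) * ‖θt - θopt‖^2)
        = ∑ _x ∈ S, (1/2) * ‖θt - θopt‖^2 := by
          rw [Finset.sum_const, nsmul_eq_mul]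
      _ ≤ _ := Finset.sum_le_sum hterm
  rw [real_inner_smul_right, real_inner_smul_right]
  have hfrac : (1:ℝ)/2 ≤ (S.card : ℝ) / ((S.card : ℝ) + c) := by
    rw [div_le_div_iff₀ (by norm_num) hnc]; linarith
  have hinner : (1/2) * ‖θt - θopt‖^2 ≤ ((S.card : ℝ))⁻¹ * ⟪θopt - θt, ∑ x ∈ S, (x - θt)⟫ := by
    rw [le_inv_mul_iff₀ hn]
    linarith
  calc (1/4) * ‖θt - θopt‖^2 = (1/2) * ((1/2) * ‖θt - θopt‖^2) := by ring
    _ ≤ ((S.card : ℝ) / ((S.card : ℝ) + c)) * (((S.card : ℝ))⁻¹ * ⟪θopt - θt, ∑ x ∈ S, (x - θt)⟫) := by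
        apply mul_le_mul hfrac hinner (by positivity) (le_trans (by norm_num) hfrac)
end
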